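/- Let A be a unital C*-algebra whose only closed two-sided ideals are 0 and A (i.e., A is topologically simple), and let B ⊆ A be a dense unital subalgebra closed under holomorphic functional calculus (in particular, if b ∈ B is invertible in A then b⁻¹ ∈ B). Then B is algebraically simple: every nonzero two-sided ideal of B equals B. -/
import Mathlib


/-- Let `A` be a unital C*-algebra whose only closed two-sided ideals are `⊥` and `⊤`
(topologically simple), and `B ⊆ A` a dense unital subalgebra such that whenever an
element of `B` is invertible in `A` its inverse lies in `B`.  Then `B` is algebraically
simple: every nonzero two-sided ideal of `B` equals `B`. -/
theorem stmt3 {A : Type*} [NormedRing A] [StarRing A] [CStarRing A] [CompleteSpace A]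
    [NormedAlgebra ℂ A] [StarModule ℂ A]
    (hsimple : ∀ I : TwoSidedIdeal A, IsClosed (I : Set A) → I = ⊥ ∨ I = ⊤)
    (B : Subalgebra ℂ A) (hdense : Dense (B : Set A))
    (hinv : ∀ b ∈ B, ∀ c : A, b * c = 1 → c * b = 1 → c ∈ B)
    (J : TwoSidedIdeal B) (hJ : J ≠ ⊥) : J = ⊤ := by
  classical
  -- the image of `J` in `A`
  set s : Set A := (↑) '' (J : Set B) with hs
  have hzero : (0 : A) ∈ s := ⟨0, J.zero_mem, rfl⟩
  have hadd : ∀ x ∈ s, ∀ y ∈ s, x + y ∈ s := by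
    rintro _ ⟨x, hx, rfl⟩ _ ⟨y, hy, rfl⟩
    exact ⟨x + y, J.add_mem hx hy, rfl⟩
  have hneg : ∀ x ∈ s, -x ∈ s := by
    rintro _ ⟨x, hx, rfl⟩
    exact ⟨-x, J.neg_mem hx, rfl⟩
  have hmulL : ∀ b ∈ (B : Set A), ∀ y ∈ s, b * y ∈ s := by
    rintro b hb _ ⟨y, hy, rfl⟩
    exact ⟨⟨b, hb⟩ * y, J.mul_mem_left _ _ hy, rfl⟩
  have hmulR : ∀ y ∈ s, ∀ b ∈ (B : Set A), y * b ∈ s := by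
    rintro _ ⟨y, hy, rfl⟩ b hb
    exact ⟨y * ⟨b, hb⟩, J.mul_mem_right _ _ hy, rfl⟩
  -- the closure of the image is a closed two-sided ideal of `A`
  let K : TwoSidedIdeal A := TwoSidedIdeal.mk' (closure s)
    (subset_closure hzero)
    (fun hx hy => map_mem_closure₂ continuous_add hx hy hadd)
    (fun hx => map_mem_closure continuous_neg hx hneg)
    (fun {x y} hy => map_mem_closure₂ continuous_mul (hdense x) hy hmulL)
    (fun {x y} hx => map_mem_closure₂ continuous_mul hx (hdense y) hmulR)
  have hKmem : ∀ x : A, x ∈ K ↔ x ∈ closure s := fun x => TwoSidedIdeal.mem_mk' _ _ _ _ _ _ x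
  have hKcl : IsClosed (K : Set A) := by
    have : (K : Set A) = closure s := TwoSidedIdeal.coe_mk' _ _ _ _ _ _
    rw [this]; exact isClosed_closure
  -- `K` is nonzero
  obtain ⟨x, hxJ, hx0⟩ : ∃ x : B, x ∈ J ∧ x ≠ 0 := by
    by_contra h
    push_neg at h
    exact hJ (eq_bot_iff.2 fun x hx => (TwoSidedIdeal.mem_bot _).2 (h x hx))
  have hKne : K ≠ ⊥ := by
    intro hK
    have : (x : A) ∈ K := (hKmem _).2 (subset_closure ⟨x, hxJ, rfl⟩)
    rw [hK, TwoSidedIdeal.mem_bot _] at this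
    exact hx0 (Subtype.ext this)
  have hKtop : K = ⊤ := (hsimple K hKcl).resolve_left hKne
  -- hence `1` lies in the closure of the image of `J`
  have h1 : (1 : A) ∈ closure s := (hKmem 1).1 (hKtop ▸ trivial)
  obtain ⟨y, hy, hdist⟩ := Metric.mem_closure_iff.1 h1 1 one_pos
  obtain ⟨j, hjJ, rfl⟩ := hy
  have hnorm : ‖1 - (j : A)‖ < 1 := by rwa [dist_eq_norm] at hdist
  -- `j` is invertible in `A`
  let w : Aˣ := Units.oneSub (1 - (j : A)) hnorm
  have hw : (w : A) = (j : A) := by simp [w, Units.val_oneSub]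
  have hc1 : (j : A) * ↑w⁻¹ = 1 := by rw [← hw]; exact w.mul_inv
  have hc2 : (↑w⁻¹ : A) * (j : A) = 1 := by rw [← hw]; exact w.inv_mul
  have hcB : (↑w⁻¹ : A) ∈ B := hinv (j : A) j.2 _ hc1 hc2
  -- so `1 ∈ J`
  have h1J : (1 : B) ∈ J := by
    have : (⟨↑w⁻¹, hcB⟩ : B) * j ∈ J := J.mul_mem_left _ _ hjJ
    have he : (⟨↑w⁻¹, hcB⟩ : B) * j = 1 := Subtype.ext (by simpa using hc2)
    rwa [he] at this
  exact J.eq_top h1J
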